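/- Define vol(R(n)) = (n/2)·(2Λ(θ_n) + Λ(θ_n + π/n) + Λ(θ_n − π/n) + Λ(π/2 − 2θ_n)) where θ_n = π/2 − arccos(1/(2 cos(π/n))). Then vol(R(n))/n tends to (5/4)·v₃ as n → ∞, where v₃ = 2Λ(π/6). -/

import Mathlib

open Real Filter

noncomputable def Λ (x : ℝ) : ℝ := -∫ t in (0:ℝ)..x, Real.log |2 * Real.sin t|

noncomputable def θ (n : ℕ) : ℝ := π / 2 - Real.arccos (1 / (2 * Real.cos (π / n)))

noncomputable def volR (n : ℕ) : ℝ :=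
  (n / 2 : ℝ) * (2 * Λ (θ n) + Λ (θ n + π / n) + Λ (θ n - π / n) + Λ (π / 2 - 2 * θ n))

/-!
The bracket in `volR n` is a continuous function of `(θ n, π / n)`, and `(θ n, π / n) → (π/6, 0)`
because `1 / (2 cos (π/n)) → 1/2 = cos (π/3)`. At `(π/6, 0)` all four arguments of `Λ` equal
`π/6`, so `volR n / n` tends to `5 Λ(π/6) / 2`.
-/

open Topology

lemma intervalIntegrable_log_abs_two_mul_sin (a b : ℝ) :
    IntervalIntegrable (fun t => log |2 * sin t|) MeasureTheory.volume a b :=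
  ((analyticOnNhd_const.mul analyticOnNhd_sin).meromorphicOn).intervalIntegrable_log_norm

@[fun_prop]
lemma continuous_Λ : Continuous Λ :=
  (intervalIntegral.continuous_primitive intervalIntegrable_log_abs_two_mul_sin 0).neg

lemma tendsto_θ_atTop : Tendsto θ atTop (𝓝 (π / 6)) := by
  have hcos : Tendsto (fun n : ℕ => cos (π / n)) atTop (𝓝 1) := by
    simpa [Function.comp_def] using
      (continuous_cos.tendsto 0).comp (tendsto_const_div_atTop_nhds_zero_nat π)
  have harg : Tendsto (fun n : ℕ => 1 / (2 * cos (π / n))) atTop (𝓝 (cos (π / 3))) := by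
    simpa using (hcos.const_mul 2).inv₀ (by norm_num)
  have harccos := ((continuous_arccos.tendsto _).comp harg).const_sub (π / 2)
  rw [arccos_cos (by positivity) (by linarith [pi_pos])] at harccos
  rwa [show π / 2 - π / 3 = π / 6 by ring] at harccos

noncomputable def volRBracket (p : ℝ × ℝ) : ℝ :=
  2 * Λ p.1 + Λ (p.1 + p.2) + Λ (p.1 - p.2) + Λ (π / 2 - 2 * p.1)

lemma continuous_volRBracket : Continuous volRBracket := by
  unfold volRBracket
  fun_prop

lemma volR_div_self (n : ℕ) (hn : n ≠ 0) : volR n / n = volRBracket (θ n, π / n) / 2 := by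
  have hn' : (n : ℝ) ≠ 0 := by exact_mod_cast hn
  simp only [volR, volRBracket]
  field_simp

theorem volR_div_n_tendsto :
    Tendsto (fun n : ℕ => volR n / n) atTop (nhds ((5 / 4) * (2 * Λ (π / 6)))) := by
  have hpair : Tendsto (fun n : ℕ => (θ n, π / n)) atTop (𝓝 (π / 6, 0)) :=
    tendsto_θ_atTop.prodMk_nhds (tendsto_const_div_atTop_nhds_zero_nat π)
  have hvalue : volRBracket (π / 6, 0) / 2 = 5 / 4 * (2 * Λ (π / 6)) := by
    simp only [volRBracket, add_zero, sub_zero]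
    ring_nf
  rw [← hvalue]
  refine (((continuous_volRBracket.tendsto _).comp hpair).div_const 2).congr' ?_
  filter_upwards [eventually_ne_atTop 0] with n hn
  exact (volR_div_self n hn).symm
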